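/- arXiv:0802.1401 — 3 statements merged into one kernel-verified Lean document; each statement's English description precedes it below -/
import Mathlib

section
/- The Thue–Morse sequence t is not eventually periodic: there do not exist a positive integer p and an index N such that t(n+p) = t(n) for all n ≥ N. -/
/-- The Thue–Morse sequence: `thueMorse n` is `true` iff the number of `1`s in
the binary expansion of `n` is odd. -/
def thueMorse (n : ℕ) : Bool := decide (Odd ((Nat.digits 2 n).count 1))

lemma tm_even (n : ℕ) : thueMorse (2 * n) = thueMorse n := by
  rcases Nat.eq_zero_or_pos n with h | h
  · simp [h]
  · unfold thueMorse
    rw [Nat.digits_def' (by norm_num : (1:ℕ) < 2) (by omega)]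
    have h1 : (2 * n) % 2 = 0 := by omega
    have h2 : (2 * n) / 2 = n := by omega
    rw [h1, h2]
    simp

lemma tm_odd (n : ℕ) : thueMorse (2 * n + 1) = !thueMorse n := by
  unfold thueMorse
  rw [Nat.digits_def' (by norm_num : (1:ℕ) < 2) (by omega)]
  have h1 : (2 * n + 1) % 2 = 1 := by omega
  have h2 : (2 * n + 1) / 2 = n := by omega
  rw [h1, h2]
  rcases Nat.even_or_odd ((Nat.digits 2 n).count 1) with hc | hc
  · simp [List.count_cons_self, hc.add_one, Nat.not_odd_iff_even.mpr hc]
  · simp [List.count_cons_self, Nat.not_odd_iff_even.mpr hc.add_one, hc]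

lemma tm_key : ∀ p : ℕ, 0 < p → ∀ N : ℕ,
    (∀ n : ℕ, N ≤ n → thueMorse (n + p) = thueMorse n) → False := by
  intro p
  induction p using Nat.strong_induction_on with
  | _ p ih =>
    intro hp N h
    rcases Nat.even_or_odd p with ⟨q, hq⟩ | ⟨q, hq⟩
    · -- even period: reduce to q
      refine ih q (by omega) (by omega) N ?_
      intro m hm
      have h2m := h (2 * m) (by omega)
      rw [show 2 * m + p = 2 * (m + q) by omega, tm_even, tm_even] at h2m
      exact h2m
    · rcases Nat.eq_zero_or_pos q with hq0 | hq0
      · -- period 1: immediate contradiction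
        have := h (2 * N) (by omega)
        rw [show 2 * N + p = 2 * N + 1 by omega, tm_odd, tm_even] at this
        cases thueMorse N <;> simp_all
      · -- odd period ≥ 3: derive eventual period 1
        have key : ∀ m : ℕ, N ≤ m →
            thueMorse (m + q + 1) = !thueMorse m ∧ thueMorse (m + q) = !thueMorse m := by
          intro m hm
          have hA := h (2 * m) (by omega)
          have hB := h (2 * m + 1) (by omega)
          rw [show 2 * m + p = 2 * (m + q) + 1 by omega, tm_odd, tm_even] at hA
          rw [show 2 * m + 1 + p = 2 * (m + q + 1) by omega, tm_even, tm_odd] at hB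
          constructor
          · exact hB
          · cases hm' : thueMorse m <;> rw [hm'] at hA <;>
              cases hmq : thueMorse (m + q) <;> simp_all
        refine ih 1 (by omega) (by omega) (N + q) ?_
        intro n hn
        obtain ⟨m, rfl⟩ : ∃ m, n = m + q := ⟨n - q, by omega⟩
        have hm : N ≤ m := by omega
        obtain ⟨h1, h2⟩ := key m hm
        rw [h1, h2]

/-- The Thue–Morse sequence is not eventually periodic. -/
theorem thueMorse_not_eventually_periodic :
    ¬ ∃ p : ℕ, 0 < p ∧ ∃ N : ℕ, ∀ n : ℕ, N ≤ n → thueMorse (n + p) = thueMorse n := by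
  rintro ⟨p, hp, N, h⟩
  exact tm_key p hp N h
end

section
/- Let A(x) = Γ(x+1) (the real Gamma function) and B(x) = cos(x), and for each real a let U_a be the L₁-iterated sequence of (A, B) with initial value a. Then for all real a and b and every ε > 0 there exists N such that for all n ≥ N, |U_a(n) − U_b(n)| < ε; that is, all the sequences of the family attract each other. -/
/-- The L₁-iterated sequence of a pair of maps `(A, B)` with initial value `a`:
at step `n` we apply `A` if the `n`-th letter of the Thue–Morse word is `A`
(i.e. `false`) and `B` otherwise. -/
def L1Seq (A B : ℝ → ℝ) (a : ℝ) : ℕ → ℝ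
  | 0 => a
  | n + 1 => if thueMorse n then B (L1Seq A B a n) else A (L1Seq A B a n)

open Real Set

lemma aux_sqrtpi_lb : (3/2 : ℝ) ≤ Real.sqrt π := by
  rw [Real.le_sqrt (by norm_num) Real.pi_pos.le]
  nlinarith [Real.pi_gt_three]

lemma aux_sqrtpi_ub : Real.sqrt π ≤ 1.8 := by
  rw [Real.sqrt_le_iff]
  refine ⟨by norm_num, ?_⟩
  nlinarith [Real.pi_lt_d2]

lemma aux_Gamma_three_halves : Real.Gamma (3/2) = Real.sqrt π / 2 := by
  have h : (3/2 : ℝ) = 1/2 + 1 := by norm_num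
  rw [h, Real.Gamma_add_one (by norm_num), Real.Gamma_one_half_eq]; ring

lemma aux_Gamma_five_halves : Real.Gamma (5/2) = 3/4 * Real.sqrt π := by
  have h : (5/2 : ℝ) = 3/2 + 1 := by norm_num
  rw [h, Real.Gamma_add_one (by norm_num), aux_Gamma_three_halves]; ring

lemma aux_gamma_slope {x y : ℝ} (hx : 3/2 ≤ x) (hxy : x < y) (hy : y ≤ 2) :
    |Real.Gamma y - Real.Gamma x| ≤ 9/10 * (y - x) := by
  have hcv := Real.convexOn_Gamma
  have mx : x ∈ Ioi (0:ℝ) := by simp only [mem_Ioi]; linarith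
  have my : y ∈ Ioi (0:ℝ) := by simp only [mem_Ioi]; linarith
  have m1 : (1:ℝ) ∈ Ioi (0:ℝ) := by norm_num
  have m32 : (3/2:ℝ) ∈ Ioi (0:ℝ) := by norm_num
  have m52 : (5/2:ℝ) ∈ Ioi (0:ℝ) := by norm_num
  have m2 : (2:ℝ) ∈ Ioi (0:ℝ) := by norm_num
  -- upper bound on the slope
  have up1 : (Real.Gamma y - Real.Gamma x)/(y - x)
      ≤ (Real.Gamma (5/2) - Real.Gamma x)/(5/2 - x) :=
    hcv.secant_mono mx my m52 (ne_of_gt hxy) (ne_of_gt (show x < 5/2 by linarith))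
      (by linarith)
  have up2 : (Real.Gamma x - Real.Gamma (5/2))/(x - 5/2)
      ≤ (Real.Gamma 2 - Real.Gamma (5/2))/(2 - 5/2) :=
    hcv.secant_mono m52 mx m2 (ne_of_lt (show x < 5/2 by linarith)) (by norm_num)
      (by linarith)
  have eq1 : (Real.Gamma x - Real.Gamma (5/2))/(x - 5/2)
      = (Real.Gamma (5/2) - Real.Gamma x)/(5/2 - x) := by
    rw [← neg_sub (Real.Gamma (5/2)), ← neg_sub ((5:ℝ)/2), neg_div_neg_eq]
  have eq2 : (Real.Gamma 2 - Real.Gamma (5/2))/(2 - 5/2) = 3/2 * Real.sqrt π - 2 := by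
    rw [Real.Gamma_two, aux_Gamma_five_halves]; ring
  have hup : (Real.Gamma y - Real.Gamma x)/(y - x) ≤ 9/10 := by
    have := aux_sqrtpi_ub
    calc (Real.Gamma y - Real.Gamma x)/(y - x)
        ≤ (Real.Gamma (5/2) - Real.Gamma x)/(5/2 - x) := up1
      _ = (Real.Gamma x - Real.Gamma (5/2))/(x - 5/2) := eq1.symm
      _ ≤ (Real.Gamma 2 - Real.Gamma (5/2))/(2 - 5/2) := up2
      _ = 3/2 * Real.sqrt π - 2 := eq2
      _ ≤ 9/10 := by nlinarith
  -- lower bound on the slope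
  have lo1 : (Real.Gamma 1 - Real.Gamma y)/(1 - y)
      ≤ (Real.Gamma x - Real.Gamma y)/(x - y) :=
    hcv.secant_mono my m1 mx (ne_of_lt (show (1:ℝ) < y by linarith))
      (ne_of_lt hxy) (by linarith)
  have eq3 : (Real.Gamma x - Real.Gamma y)/(x - y)
      = (Real.Gamma y - Real.Gamma x)/(y - x) := by
    rw [← neg_sub (Real.Gamma y), ← neg_sub y, neg_div_neg_eq]
  have lo2 : (Real.Gamma 1 - Real.Gamma (3/2))/(1 - 3/2)
      ≤ (Real.Gamma 1 - Real.Gamma y)/(1 - y) := by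
    have h := hcv.secant_mono m1 m32 my (by norm_num) (ne_of_gt (show (1:ℝ) < y by linarith))
      (by linarith)
    have e1 : (Real.Gamma (3/2) - Real.Gamma 1)/(3/2 - 1)
        = (Real.Gamma 1 - Real.Gamma (3/2))/(1 - 3/2) := by
      rw [← neg_sub (Real.Gamma (3/2)), ← neg_sub ((3:ℝ)/2), neg_div_neg_eq]
    have e2 : (Real.Gamma y - Real.Gamma 1)/(y - 1)
        = (Real.Gamma 1 - Real.Gamma y)/(1 - y) := by
      rw [← neg_sub (Real.Gamma y), ← neg_sub y, neg_div_neg_eq]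
    rw [← e1, ← e2]; exact h
  have eq4 : (Real.Gamma 1 - Real.Gamma (3/2))/(1 - 3/2) = Real.sqrt π - 2 := by
    rw [Real.Gamma_one, aux_Gamma_three_halves]; ring
  have hlo : -(9/10) ≤ (Real.Gamma y - Real.Gamma x)/(y - x) := by
    have := aux_sqrtpi_lb
    calc (-(9/10) : ℝ) ≤ Real.sqrt π - 2 := by nlinarith
      _ = (Real.Gamma 1 - Real.Gamma (3/2))/(1 - 3/2) := eq4.symm
      _ ≤ (Real.Gamma 1 - Real.Gamma y)/(1 - y) := lo2
      _ ≤ (Real.Gamma x - Real.Gamma y)/(x - y) := lo1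
      _ = (Real.Gamma y - Real.Gamma x)/(y - x) := eq3
  have hpos : (0:ℝ) < y - x := by linarith
  rw [abs_le]
  constructor
  · have := (div_le_iff₀ hpos).mp hup
    have h2 : -(9/10) * (y - x) ≤ Real.Gamma y - Real.Gamma x := by
      have := (le_div_iff₀ hpos).mp hlo
      linarith
    linarith
  · have := (div_le_iff₀ hpos).mp hup
    linarith

lemma aux_gamma_mem {s : ℝ} (h1 : 3/2 ≤ s) (h2 : s ≤ 2) :
    Real.Gamma s ∈ Icc (1/2:ℝ) 1 := by
  have hcv := Real.convexOn_Gamma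
  have m32 : (3/2:ℝ) ∈ Ioi (0:ℝ) := by norm_num
  have m2 : (2:ℝ) ∈ Ioi (0:ℝ) := by norm_num
  have hub : Real.Gamma s ≤ 1 := by
    have hseg : s ∈ segment ℝ (3/2:ℝ) 2 := by
      rw [segment_eq_Icc (by norm_num : (3/2:ℝ) ≤ 2)]
      exact ⟨h1, h2⟩
    have := hcv.le_on_segment m32 m2 hseg
    have h32 : Real.Gamma (3/2) ≤ 1 := by
      rw [aux_Gamma_three_halves]; nlinarith [aux_sqrtpi_ub]
    rw [Real.Gamma_two] at this
    exact this.trans (max_le h32 le_rfl)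
  have hlb : 1/2 ≤ Real.Gamma s := by
    rcases eq_or_lt_of_le h1 with h | h
    · rw [← h, aux_Gamma_three_halves]; nlinarith [aux_sqrtpi_lb]
    · have m1 : (1:ℝ) ∈ Ioi (0:ℝ) := by norm_num
      have ms : s ∈ Ioi (0:ℝ) := by simp only [mem_Ioi]; linarith
      have hsec := hcv.secant_mono m32 m1 ms (by norm_num)
        (ne_of_gt h) (by linarith)
      -- (Γ 1 - Γ (3/2))/(1 - 3/2) ≤ (Γ s - Γ (3/2))/(s - 3/2)
      rw [Real.Gamma_one, aux_Gamma_three_halves] at hsec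
      have hx : (1 - Real.sqrt π / 2)/((1:ℝ) - 3/2) = Real.sqrt π - 2 := by ring
      rw [hx] at hsec
      have hpos : (0:ℝ) < s - 3/2 := by linarith
      have := (le_div_iff₀ hpos).mp hsec
      nlinarith [aux_sqrtpi_lb, aux_sqrtpi_ub]
  exact ⟨hlb, hub⟩

lemma aux_gamma_lip {x y : ℝ} (hx : x ∈ Icc (1/2:ℝ) 1) (hy : y ∈ Icc (1/2:ℝ) 1) :
    |Real.Gamma (x+1) - Real.Gamma (y+1)| ≤ 9/10 * |x - y| := by
  rcases lt_trichotomy x y with h | h | h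
  · have := aux_gamma_slope (x := x+1) (y := y+1) (by linarith [hx.1]) (by linarith)
      (by linarith [hy.2])
    rw [abs_sub_comm, abs_of_nonpos (by linarith : x - y ≤ 0)]
    calc |Real.Gamma (y+1) - Real.Gamma (x+1)| ≤ 9/10 * (y + 1 - (x+1)) := this
      _ = 9/10 * -(x - y) := by ring
  · simp [h]
  · have := aux_gamma_slope (x := y+1) (y := x+1) (by linarith [hy.1]) (by linarith)
      (by linarith [hx.2])
    rw [abs_of_nonneg (by linarith : (0:ℝ) ≤ x - y)]
    calc |Real.Gamma (x+1) - Real.Gamma (y+1)| ≤ 9/10 * (x + 1 - (y+1)) := this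
      _ = 9/10 * (x - y) := by ring

lemma aux_sin_one_le : Real.sin 1 ≤ 9/10 := by
  have h := Real.sin_bound (x := 1) (by norm_num)
  rw [abs_le] at h
  norm_num at h
  linarith [h.2]

lemma aux_cos_one_ge : (1/2 : ℝ) ≤ Real.cos 1 := by
  have h := Real.sin_bound (x := 1/2) (by rw [abs_of_nonneg] <;> norm_num)
  rw [abs_le] at h
  have hs : Real.sin (1/2) ≤ 741/1536 := by
    rw [abs_of_nonneg (by norm_num)] at h
    norm_num at h
    linarith [h.2]
  have hsn : 0 ≤ Real.sin (1/2) :=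
    Real.sin_nonneg_of_nonneg_of_le_pi (by norm_num) (by linarith [Real.pi_gt_three])
  have hc : Real.cos 1 = 1 - 2 * Real.sin (1/2)^2 := by
    have h1 := Real.cos_two_mul (1/2)
    have h2 := Real.cos_sq' (1/2)
    norm_num at h1
    rw [h1, h2]; ring
  rw [hc]
  nlinarith

lemma aux_cos_mem {x : ℝ} (h : |x| ≤ 1) : Real.cos x ∈ Icc (1/2:ℝ) 1 := by
  refine ⟨?_, Real.cos_le_one x⟩
  have h1 : Real.cos 1 ≤ Real.cos |x| :=
    Real.cos_le_cos_of_nonneg_of_le_pi (abs_nonneg x) (by linarith [Real.pi_gt_three]) h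
  rw [Real.cos_abs] at h1
  linarith [aux_cos_one_ge]

lemma aux_cos_lip {x y : ℝ} (hx : x ∈ Icc (1/2:ℝ) 1) (hy : y ∈ Icc (1/2:ℝ) 1) :
    |Real.cos x - Real.cos y| ≤ 9/10 * |x - y| := by
  rw [Real.cos_sub_cos]
  have h1 : |Real.sin ((x+y)/2)| ≤ 9/10 := by
    have hnn : 0 ≤ Real.sin ((x+y)/2) :=
      Real.sin_nonneg_of_nonneg_of_le_pi (by linarith [hx.1, hy.1])
        (by linarith [hx.2, hy.2, Real.pi_gt_three])
    rw [abs_of_nonneg hnn]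
    have : Real.sin ((x+y)/2) ≤ Real.sin 1 :=
      Real.sin_le_sin_of_le_of_le_pi_div_two (by linarith [hx.1, hy.1, Real.pi_gt_three])
        (by linarith [Real.pi_gt_three]) (by linarith [hx.2, hy.2])
    linarith [aux_sin_one_le]
  have h2 : |Real.sin ((x-y)/2)| ≤ |x - y|/2 := by
    rcases eq_or_ne x y with rfl | hne
    · simp
    · have := (Real.abs_sin_lt_abs (x := (x-y)/2) (by
        intro hh
        apply hne
        have : x - y = 0 := by linarith [(div_eq_zero_iff.mp hh).resolve_right (by norm_num)]
        linarith)).le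
      calc |Real.sin ((x-y)/2)| ≤ |(x-y)/2| := this
        _ = |x - y|/2 := by rw [abs_div]; norm_num
  calc |(-2) * Real.sin ((x+y)/2) * Real.sin ((x-y)/2)|
      = 2 * (|Real.sin ((x+y)/2)| * |Real.sin ((x-y)/2)|) := by
        rw [abs_mul, abs_mul]; norm_num; ring
    _ ≤ 2 * ((9/10) * (|x - y|/2)) := by
        apply mul_le_mul_of_nonneg_left _ (by norm_num)
        exact mul_le_mul h1 h2 (abs_nonneg _) (by norm_num)
    _ = 9/10 * |x - y| := by ring

local notation "U" => L1Seq (fun x => Real.Gamma (x + 1)) Real.cos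

lemma aux_d1 : Nat.digits 2 1 = [1] := by
  rw [Nat.digits_def' (by norm_num : 1 < 2) (by norm_num)]
  norm_num

lemma aux_d2 : Nat.digits 2 2 = [0, 1] := by
  rw [Nat.digits_def' (by norm_num : 1 < 2) (by norm_num)]
  norm_num [aux_d1]

lemma aux_tm1 : thueMorse 1 = true := by
  simp [thueMorse, aux_d1, Nat.odd_iff]

lemma aux_tm2 : thueMorse 2 = true := by
  simp [thueMorse, aux_d2, Nat.odd_iff]

lemma aux_trap (a : ℝ) : ∀ n : ℕ, U a (n + 3) ∈ Icc (1/2:ℝ) 1 := by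
  intro n
  induction n with
  | zero =>
    show U a 3 ∈ _
    have h3 : U a 3 = Real.cos (U a 2) := by
      show (if thueMorse 2 then _ else _) = _
      rw [aux_tm2, if_pos rfl]
    have h2 : U a 2 = Real.cos (U a 1) := by
      show (if thueMorse 1 then _ else _) = _
      rw [aux_tm1, if_pos rfl]
    rw [h3]
    exact aux_cos_mem (by rw [h2]; exact Real.abs_cos_le_one _)
  | succ n ih =>
    show (if thueMorse (n + 3) then _ else _) ∈ _
    cases thueMorse (n + 3) with
    | true =>
      rw [if_pos rfl]
      exact aux_cos_mem (abs_le.mpr ⟨by linarith [ih.1], by linarith [ih.2]⟩)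
    | false =>
      rw [if_neg Bool.false_ne_true]
      exact aux_gamma_mem (by linarith [ih.1]) (by linarith [ih.2])

lemma aux_contract (a b : ℝ) : ∀ n : ℕ,
    |U a (n + 3) - U b (n + 3)| ≤ (9/10 : ℝ)^n * (1/2) := by
  intro n
  induction n with
  | zero =>
    have ha := aux_trap a 0
    have hb := aux_trap b 0
    rw [pow_zero, one_mul, abs_le]
    exact ⟨by linarith [ha.1, hb.2], by linarith [ha.2, hb.1]⟩
  | succ n ih =>
    have ha := aux_trap a n
    have hb := aux_trap b n
    have key : |U a (n + 1 + 3) - U b (n + 1 + 3)|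
        ≤ 9/10 * |U a (n + 3) - U b (n + 3)| := by
      have e : n + 1 + 3 = (n + 3) + 1 := by omega
      rw [e]
      show |(if thueMorse (n+3) then _ else _) - (if thueMorse (n+3) then _ else _)| ≤ _
      cases thueMorse (n + 3) with
      | true => rw [if_pos rfl]; exact aux_cos_lip ha hb
      | false => rw [if_neg Bool.false_ne_true]; exact aux_gamma_lip ha hb
    calc |U a (n + 1 + 3) - U b (n + 1 + 3)|
        ≤ 9/10 * |U a (n + 3) - U b (n + 3)| := key
      _ ≤ 9/10 * ((9/10 : ℝ)^n * (1/2)) := by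
          apply mul_le_mul_of_nonneg_left ih (by norm_num)
      _ = (9/10 : ℝ)^(n+1) * (1/2) := by ring

/-- For `A x = Γ (x + 1)` and `B x = cos x`, all the L₁-iterated sequences of
the family attract each other. -/
theorem L1Seq_gamma_cos_attract_each_other :
    ∀ a b : ℝ, ∀ ε : ℝ, 0 < ε → ∃ N : ℕ, ∀ n : ℕ, N ≤ n →
      |L1Seq (fun x => Real.Gamma (x + 1)) Real.cos a n -
        L1Seq (fun x => Real.Gamma (x + 1)) Real.cos b n| < ε := by
  intro a b ε hε
  obtain ⟨k, hk⟩ := exists_pow_lt_of_lt_one hε (by norm_num : (9/10 : ℝ) < 1)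
  refine ⟨k + 3, fun n hn => ?_⟩
  have hn3 : n - 3 + 3 = n := by omega
  have h1 := aux_contract a b (n - 3)
  rw [hn3] at h1
  have h2 : (9/10 : ℝ)^(n-3) ≤ (9/10 : ℝ)^k :=
    pow_le_pow_of_le_one (by norm_num) (by norm_num) (by omega)
  have h3 : (9/10 : ℝ)^k * (1/2) < ε := by
    have : (0:ℝ) < (9/10 : ℝ)^k := pow_pos (by norm_num) k
    linarith
  calc |U a n - U b n| ≤ (9/10 : ℝ)^(n-3) * (1/2) := h1
    _ ≤ (9/10 : ℝ)^k * (1/2) := by linarith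
    _ < ε := h3
end

section
/- Let A(x) = Γ(x+1) (the real Gamma function) and B(x) = cos(x). The pair {A, B} is not topologically transitive with respect to the Lindenmayer system L₁: there exist nonempty open intervals U and V of ℝ such that for every positive integer k and every x ∈ U, the k-th L₁-iterate of x (the composition of the first k maps prescribed by the infinite word of L₁, applied to x) does not belong to V. -/
open Set

theorem L1Seq_mem_of_mapsTo {A B : ℝ → ℝ} {s : Set ℝ} (hA : MapsTo A s s) (hB : MapsTo B s s)
    {a : ℝ} (ha : a ∈ s) (n : ℕ) : L1Seq A B a n ∈ s := by
  induction n with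
  | zero => exact ha
  | succ n ih =>
    rw [L1Seq]
    split
    · exact hB ih
    · exact hA ih

theorem Real.Gamma_le_one_of_mem_Icc {s : ℝ} (hs : s ∈ Icc (1 : ℝ) 2) : Real.Gamma s ≤ 1 := by
  have h := Real.convexOn_Gamma.le_max_of_mem_Icc (mem_Ioi.2 one_pos) (mem_Ioi.2 two_pos) hs
  rwa [Real.Gamma_one, Real.Gamma_two, max_self] at h

theorem mapsTo_Gamma_add_one_Ioc :
    MapsTo (fun x => Real.Gamma (x + 1)) (Ioc (0 : ℝ) 1) (Ioc 0 1) := fun x hx =>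
  ⟨Real.Gamma_pos_of_pos (by linarith [hx.1]),
    Real.Gamma_le_one_of_mem_Icc ⟨by linarith [hx.1], by linarith [hx.2]⟩⟩

theorem mapsTo_cos_Ioc : MapsTo Real.cos (Ioc (0 : ℝ) 1) (Ioc 0 1) := fun x hx =>
  ⟨Real.cos_pos_of_mem_Ioo ⟨by linarith [hx.1, Real.pi_pos], by linarith [hx.2, Real.pi_gt_three]⟩,
    Real.cos_le_one x⟩

/-- For `A x = Γ (x + 1)` and `B x = cos x`, the pair `{A, B}` is not
topologically transitive with respect to the Lindenmayer system L₁: there are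
nonempty open intervals `U = Ioo u₁ u₂` and `V = Ioo v₁ v₂` such that no
L₁-iterate of any point of `U` lies in `V`. -/
theorem L1Seq_gamma_cos_not_topologically_transitive :
    ∃ u₁ u₂ v₁ v₂ : ℝ, u₁ < u₂ ∧ v₁ < v₂ ∧
      ∀ k : ℕ, 0 < k → ∀ x ∈ Set.Ioo u₁ u₂,
        L1Seq (fun x => Real.Gamma (x + 1)) Real.cos x k ∉ Set.Ioo v₁ v₂ := by
  refine ⟨0, 1, 2, 3, by norm_num, by norm_num, fun k _ x hx hV => ?_⟩
  have hle : L1Seq (fun x => Real.Gamma (x + 1)) Real.cos x k ≤ 1 :=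
    (L1Seq_mem_of_mapsTo mapsTo_Gamma_add_one_Ioc mapsTo_cos_Ioc (Ioo_subset_Ioc_self hx) k).2
  linarith [hV.1]
end
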